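/- Assume Weil's bound for the quadratic character. For any fixed n, there exists Q such that for all odd prime powers q > Q and all disjoint sets A, B ⊆ F_q with |A| + |B| ≤ n, there exists x ∈ F_q with x - a a nonzero square for every a ∈ A and x - b a non-square for every b ∈ B. -/

import Mathlib

/-!
Put `ε = 1` on `A` and `ε = -1` on `B`, and weigh each `x` by
`w(x) = ∏_{c ∈ A ∪ B} (1 + ε(c) χ(x - c))`. Off `A ∪ B` the weight is nonnegative and vanishes
unless `χ(x - c) = ε(c)` for every `c`, i.e. unless `x` is the vertex sought. Expanding the
product, `∑ₓ w(x)` is `q` plus `2^{|A ∪ B|}` character sums of products of distinct shifts of `χ`,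
each of size `O(√q)` by Weil's bound, while `A ∪ B` itself carries total weight at most
`|A ∪ B| 2^{|A ∪ B|}`. Hence some `x ∉ A ∪ B` has `w(x) > 0` once `q` is large.
-/

open Finset

section QuadraticCharWeight

variable {F : Type*} [Field F] [Fintype F] [DecidableEq F]

lemma abs_quadraticChar_le_one (y : F) : |(quadraticChar F y : ℝ)| ≤ 1 := by
  rcases quadraticChar_isQuadratic F y with h | h | h <;> simp [h]

lemma isSquare_of_one_add_quadraticChar_ne_zero {y : F} (hy : y ≠ 0)
    (h : 1 + (quadraticChar F y : ℝ) ≠ 0) : IsSquare y := by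
  rcases quadraticChar_dichotomy hy with hχ | hχ
  · exact (quadraticChar_one_iff_isSquare hy).mp hχ
  · simp [hχ] at h

lemma not_isSquare_of_one_sub_quadraticChar_ne_zero {y : F} (hy : y ≠ 0)
    (h : 1 - (quadraticChar F y : ℝ) ≠ 0) : ¬IsSquare y := by
  rcases quadraticChar_dichotomy hy with hχ | hχ
  · simp [hχ] at h
  · exact quadraticChar_neg_one_iff_not_isSquare.mp hχ

variable (F) in
def QuadraticCharWeilBound : Prop :=
  ∀ (k : ℕ) (c : Fin k → F), Function.Injective c → 1 ≤ k →
    |∑ x : F, ∏ i : Fin k, ((quadraticChar F (x - c i) : ℤ) : ℝ)| ≤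
      ((k : ℝ) - 1) * Real.sqrt (Fintype.card F)

lemma QuadraticCharWeilBound.abs_sum_prod_le (hW : QuadraticCharWeilBound F) {u : Finset F}
    (hu : u.Nonempty) :
    |∑ x : F, ∏ c ∈ u, (quadraticChar F (x - c) : ℝ)| ≤
      ((#u : ℝ) - 1) * Real.sqrt (Fintype.card F) := by
  have hprod (x : F) : ∏ c ∈ u, (quadraticChar F (x - c) : ℝ) =
      ∏ i : Fin #u, (quadraticChar F (x - u.equivFin.symm i) : ℝ) := by
    rw [← prod_coe_sort u]
    exact (Equiv.prod_comp u.equivFin.symm fun c : u => (quadraticChar F (x - c) : ℝ)).symm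
  simp only [hprod]
  exact hW #u _ (Subtype.val_injective.comp u.equivFin.symm.injective) hu.card_pos

noncomputable def quadraticCharWeight (S : Finset F) (ε : F → ℝ) (x : F) : ℝ :=
  ∏ c ∈ S, (1 + ε c * quadraticChar F (x - c))

variable {S : Finset F} {ε : F → ℝ}

lemma one_add_mul_quadraticChar_mem_Icc {e : ℝ} (he : |e| ≤ 1) (y : F) :
    1 + e * quadraticChar F y ∈ Set.Icc (0 : ℝ) 2 := by
  have h : |e * quadraticChar F y| ≤ 1 := by
    rw [abs_mul]
    exact mul_le_one₀ he (abs_nonneg _) (abs_quadraticChar_le_one y)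
  constructor <;> linarith [abs_le.mp h]

lemma quadraticCharWeight_nonneg (hε : ∀ c ∈ S, |ε c| ≤ 1) (x : F) :
    0 ≤ quadraticCharWeight S ε x :=
  prod_nonneg fun _ hc => (one_add_mul_quadraticChar_mem_Icc (hε _ hc) _).1

lemma quadraticCharWeight_le (hε : ∀ c ∈ S, |ε c| ≤ 1) (x : F) :
    quadraticCharWeight S ε x ≤ 2 ^ #S := by
  calc quadraticCharWeight S ε x ≤ ∏ _c ∈ S, (2 : ℝ) :=
        prod_le_prod (fun c hc => (one_add_mul_quadraticChar_mem_Icc (hε _ hc) _).1)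
          (fun c hc => (one_add_mul_quadraticChar_mem_Icc (hε _ hc) _).2)
    _ = 2 ^ #S := prod_const 2

lemma one_add_mul_quadraticChar_ne_zero {x c : F} (hx : quadraticCharWeight S ε x ≠ 0)
    (hc : c ∈ S) : 1 + ε c * quadraticChar F (x - c) ≠ 0 :=
  prod_ne_zero_iff.mp hx c hc

lemma sum_quadraticCharWeight_eq :
    ∑ x, quadraticCharWeight S ε x =
      ∑ t ∈ S.powerset, (∏ c ∈ t, ε c) * ∑ x, ∏ c ∈ t, (quadraticChar F (x - c) : ℝ) := by
  simp only [quadraticCharWeight, prod_one_add, prod_mul_distrib, mul_sum]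
  exact sum_comm

/-- Only the empty pattern `t = ∅` contributes a main term, namely `q`. -/
lemma card_sub_le_sum_quadraticCharWeight (hW : QuadraticCharWeilBound F)
    (hε : ∀ c ∈ S, |ε c| ≤ 1) :
    (Fintype.card F : ℝ) - 2 ^ #S * #S * Real.sqrt (Fintype.card F) ≤
      ∑ x, quadraticCharWeight S ε x := by
  set q : ℝ := (Fintype.card F : ℝ)
  have hterm : ∀ t ∈ S.powerset.erase ∅,
      |(∏ c ∈ t, ε c) * ∑ x, ∏ c ∈ t, (quadraticChar F (x - c) : ℝ)| ≤ #S * Real.sqrt q := by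
    intro t ht
    obtain ⟨ht0, htS⟩ := mem_erase.mp ht
    have htS := mem_powerset.mp htS
    have hεt : |∏ c ∈ t, ε c| ≤ 1 := by
      rw [abs_prod]
      exact prod_le_one (fun _ _ => abs_nonneg _) fun c hc => hε c (htS hc)
    have hcard : (#t : ℝ) - 1 ≤ #S := by
      have : (#t : ℝ) ≤ #S := by exact_mod_cast card_le_card htS
      linarith
    rw [abs_mul]
    calc _ ≤ 1 * (((#t : ℝ) - 1) * Real.sqrt q) :=
          mul_le_mul hεt (hW.abs_sum_prod_le (nonempty_iff_ne_empty.mpr ht0))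
            (abs_nonneg _) zero_le_one
      _ ≤ #S * Real.sqrt q := by
          rw [one_mul]; exact mul_le_mul_of_nonneg_right hcard (Real.sqrt_nonneg q)
  have herror : |∑ t ∈ S.powerset.erase ∅,
      (∏ c ∈ t, ε c) * ∑ x, ∏ c ∈ t, (quadraticChar F (x - c) : ℝ)| ≤
        2 ^ #S * #S * Real.sqrt q := by
    calc _ ≤ ∑ _t ∈ S.powerset.erase ∅, (#S : ℝ) * Real.sqrt q :=
          (abs_sum_le_sum_abs _ _).trans (sum_le_sum hterm)
      _ ≤ 2 ^ #S * (#S * Real.sqrt q) := by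
          rw [sum_const, nsmul_eq_mul]
          gcongr
          exact_mod_cast (card_erase_le.trans (card_powerset S).le)
      _ = 2 ^ #S * #S * Real.sqrt q := by ring
  rw [sum_quadraticCharWeight_eq, ← add_sum_erase _ _ (empty_mem_powerset S)]
  simp only [prod_empty, one_mul, sum_const, card_univ, nsmul_one]
  linarith [(abs_le.mp herror).1]

lemma exists_notMem_quadraticCharWeight_ne_zero (hW : QuadraticCharWeilBound F)
    (hε : ∀ c ∈ S, |ε c| ≤ 1)
    (hq : 2 ^ #S * #S * (Real.sqrt (Fintype.card F) + 1) < Fintype.card F) :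
    ∃ x ∉ S, quadraticCharWeight S ε x ≠ 0 := by
  by_contra! hzero
  have hsum : ∑ x, quadraticCharWeight S ε x ≤ #S * 2 ^ #S := by
    rw [← sum_subset (subset_univ S) fun x _ hx => hzero x hx]
    calc _ ≤ ∑ _x ∈ S, (2 : ℝ) ^ #S := sum_le_sum fun x _ => quadraticCharWeight_le hε x
      _ = #S * 2 ^ #S := by rw [sum_const, nsmul_eq_mul]
  linarith [card_sub_le_sum_quadraticCharWeight hW hε]

end QuadraticCharWeight

lemma mul_sqrt_add_one_lt {C : ℝ} {q : ℕ} (hC : 0 ≤ C) (hq : (2 * C) ^ 2 < q) :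
    C * (Real.sqrt q + 1) < q := by
  have hs : 2 * C < Real.sqrt q := Real.lt_sqrt (by positivity) |>.mpr hq
  have hs1 : 1 ≤ Real.sqrt q := by
    have hq1 : (1 : ℝ) ≤ q := Nat.one_le_cast.mpr (Nat.cast_pos.mp ((sq_nonneg _).trans_lt hq))
    simpa using Real.sqrt_le_sqrt hq1
  have hsq : Real.sqrt q * Real.sqrt q = q := Real.mul_self_sqrt (Nat.cast_nonneg q)
  nlinarith

/-- Assuming Weil's bound for the quadratic character, for every fixed n there is Q
such that every finite field of odd order > Q satisfies the n-th adjacency property: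
for disjoint A, B with |A| + |B| ≤ n there is x with x - a a nonzero square for all
a ∈ A and x - b a non-square for all b ∈ B. -/
theorem paley_adjacency_property
    (hWeil : ∀ (F : Type) [Field F] [Fintype F] [DecidableEq F],
      Odd (Fintype.card F) → ∀ (k : ℕ) (c : Fin k → F), Function.Injective c → 1 ≤ k →
        |∑ x : F, ∏ i : Fin k, ((quadraticChar F (x - c i) : ℤ) : ℝ)| ≤
          ((k : ℝ) - 1) * Real.sqrt (Fintype.card F))
    (n : ℕ) :
    ∃ Q : ℕ, ∀ (F : Type) [Field F] [Fintype F] [DecidableEq F],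
      Odd (Fintype.card F) → Q < Fintype.card F →
      ∀ A B : Finset F, Disjoint A B → A.card + B.card ≤ n →
        ∃ x : F, (∀ a ∈ A, x - a ≠ 0 ∧ IsSquare (x - a)) ∧ (∀ b ∈ B, ¬ IsSquare (x - b)) := by
  refine ⟨(2 * (2 ^ n * n)) ^ 2, fun F _ _ _ hodd hQ A B hAB hcard => ?_⟩
  set ε : F → ℝ := fun c => if c ∈ A then 1 else -1
  have hε : ∀ c ∈ A ∪ B, |ε c| ≤ 1 := fun c _ => by by_cases h : c ∈ A <;> simp [ε, h]
  have hS : #(A ∪ B) ≤ n := (card_union_le A B).trans hcard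
  have hq : 2 ^ #(A ∪ B) * #(A ∪ B) * (Real.sqrt (Fintype.card F) + 1) < Fintype.card F := by
    refine lt_of_le_of_lt ?_ (mul_sqrt_add_one_lt (C := 2 ^ n * n) (by positivity) ?_)
    · gcongr; norm_num
    · exact_mod_cast hQ
  obtain ⟨x, hxS, hx⟩ := exists_notMem_quadraticCharWeight_ne_zero (hWeil F hodd) hε hq
  have hsub {c : F} (hc : c ∈ A ∪ B) : x - c ≠ 0 := sub_ne_zero.mpr fun h => hxS (h ▸ hc)
  refine ⟨x, fun a ha => ⟨hsub (mem_union_left B ha), ?_⟩, fun b hb => ?_⟩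
  · refine isSquare_of_one_add_quadraticChar_ne_zero (hsub (mem_union_left B ha)) ?_
    simpa [ε, ha] using one_add_mul_quadraticChar_ne_zero hx (mem_union_left B ha)
  · refine not_isSquare_of_one_sub_quadraticChar_ne_zero (hsub (mem_union_right A hb)) ?_
    simpa [ε, disjoint_right.mp hAB hb, ← sub_eq_add_neg] using
      one_add_mul_quadraticChar_ne_zero hx (mem_union_right A hb)
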